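/- Let E be a graph and R a unital commutative ring. If I is a nonzero graded ideal of L_R(E), then there exist a vertex v ∈ E^0 and a nonzero r ∈ R such that rv ∈ I. -/

import Mathlib

structure LPGraph where
  V : Type
  E : Type
  s : E → V
  r : E → V

namespace LPGraph

/-- `v ≥ w`: there is a directed path (possibly trivial) from `v` to `w`. -/
def Reaches (G : LPGraph) (v w : G.V) : Prop :=
  Relation.ReflTransGen (fun a b => ∃ e : G.E, G.s e = a ∧ G.r e = b) v w

def Hereditary (G : LPGraph) (X : Set G.V) : Prop :=
  ∀ e : G.E, G.s e ∈ X → G.r e ∈ X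

def Saturated (G : LPGraph) (X : Set G.V) : Prop :=
  ∀ v : G.V, {e : G.E | G.s e = v}.Finite → {e : G.E | G.s e = v}.Nonempty →
    (∀ e : G.E, G.s e = v → G.r e ∈ X) → v ∈ X

/-- The saturation of `X`: the smallest saturated subset containing `X`. -/
def saturation (G : LPGraph) (X : Set G.V) : Set G.V :=
  ⋂₀ {S : Set G.V | G.Saturated S ∧ X ⊆ S}

def tree (G : LPGraph) (v : G.V) : Set G.V := {w | G.Reaches v w}

def MT1 (G : LPGraph) (M : Set G.V) : Prop :=
  ∀ v w : G.V, w ∈ M → G.Reaches v w → v ∈ M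

def MT2 (G : LPGraph) (M : Set G.V) : Prop :=
  ∀ v ∈ M, {e : G.E | G.s e = v}.Finite → {e : G.E | G.s e = v}.Nonempty →
    ∃ e : G.E, G.s e = v ∧ G.r e ∈ M

def MT3on (G : LPGraph) (M : Set G.V) : Prop :=
  ∀ v ∈ M, ∀ w ∈ M, ∃ y ∈ M, G.Reaches v y ∧ G.Reaches w y

def MT3 (G : LPGraph) : Prop :=
  ∀ v w : G.V, ∃ y : G.V, G.Reaches v y ∧ G.Reaches w y

def Omega (G : LPGraph) (X : Set G.V) : Set G.V :=
  {w | w ∉ X ∧ ∀ v ∈ X, ¬ G.Reaches w v}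

def OmegaV (G : LPGraph) (v : G.V) : Set G.V :=
  {w | w ≠ v ∧ ¬ G.Reaches w v}

end LPGraph

namespace LPGraph

def IsBifurcation (G : LPGraph) (v : G.V) : Prop :=
  ∃ e f : G.E, e ≠ f ∧ G.s e = v ∧ G.s f = v

def IsPathList (G : LPGraph) (l : List G.E) : Prop :=
  l.Chain' (fun e f => G.r e = G.s f)

def IsClosedPath (G : LPGraph) (v : G.V) (l : List G.E) : Prop :=
  l ≠ [] ∧ G.IsPathList l ∧ (∀ e ∈ l.head?, G.s e = v) ∧ (∀ e ∈ l.getLast?, G.r e = v)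

def IsClosedSimplePath (G : LPGraph) (v : G.V) (l : List G.E) : Prop :=
  G.IsClosedPath v l ∧ ∀ e ∈ l.tail, G.s e ≠ v

def ConditionK (G : LPGraph) : Prop :=
  ∀ v : G.V, (¬ ∃ l : List G.E, G.IsClosedPath v l) ∨
    (∃ l₁ l₂ : List G.E, G.IsClosedSimplePath v l₁ ∧ G.IsClosedSimplePath v l₂ ∧ l₁ ≠ l₂)

def ConditionL (G : LPGraph) : Prop :=
  ∀ (v : G.V) (l : List G.E), G.IsClosedSimplePath v l →
    ∃ e ∈ l, ∃ f : G.E, f ≠ e ∧ G.s f = G.s e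

/-- `v` is a line point: no vertex in the tree of `v` is a bifurcation or the base of a
closed path. -/
def LinePoint (G : LPGraph) (v : G.V) : Prop :=
  ∀ w : G.V, G.Reaches v w →
    ¬ G.IsBifurcation w ∧ ¬ ∃ l : List G.E, G.IsClosedPath w l

/-- `B_H`: vertices outside `H` emitting infinitely many edges, but finitely many
(and at least one) into `E⁰ \ H`. -/
def BH (G : LPGraph) (H : Set G.V) : Set G.V :=
  {v | v ∉ H ∧ {e : G.E | G.s e = v}.Infinite ∧
    {e : G.E | G.s e = v ∧ G.r e ∉ H}.Finite ∧
    {e : G.E | G.s e = v ∧ G.r e ∉ H}.Nonempty}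

/-- An admissible pair: `H` hereditary saturated, `S ⊆ B_H`. -/
def Admissible (G : LPGraph) (H S : Set G.V) : Prop :=
  G.Hereditary H ∧ G.Saturated H ∧ S ⊆ G.BH H

/-- Finite paths in `G`, indexed by source and range. -/
inductive Path (G : LPGraph) : G.V → G.V → Type
  | nil (v : G.V) : Path G v v
  | cons (e : G.E) {w : G.V} (p : Path G (G.r e) w) : Path G (G.s e) w

def Path.length {G : LPGraph} : ∀ {v w : G.V}, Path G v w → ℕ
  | _, _, .nil _ => 0
  | _, _, .cons _ p => p.length + 1

/-- The path contains no bifurcations among the sources of its edges. -/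
def Path.NoBif {G : LPGraph} : ∀ {v w : G.V}, Path G v w → Prop
  | _, _, .nil _ => True
  | _, _, .cons e p => (∀ f : _, LPGraph.s _ f = LPGraph.s _ e → f = e) ∧ p.NoBif

end LPGraph

/-- Generators of the Leavitt path algebra: vertices, real edges and ghost edges. -/
inductive LGen (G : LPGraph) : Type
  | vertex : G.V → LGen G
  | edge : G.E → LGen G
  | ghost : G.E → LGen G

variable (R : Type) [CommRing R] (G : LPGraph)

noncomputable def fv (v : G.V) : FreeAlgebra R (LGen G) := FreeAlgebra.ι R (LGen.vertex v)
noncomputable def fe (e : G.E) : FreeAlgebra R (LGen G) := FreeAlgebra.ι R (LGen.edge e)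
noncomputable def fg (e : G.E) : FreeAlgebra R (LGen G) := FreeAlgebra.ι R (LGen.ghost e)

/-- The defining relations of the Leavitt path algebra. -/
inductive LRel : FreeAlgebra R (LGen G) → FreeAlgebra R (LGen G) → Prop
  | idem (v : G.V) : LRel (fv R G v * fv R G v) (fv R G v)
  | orth (v w : G.V) (h : v ≠ w) : LRel (fv R G v * fv R G w) 0
  | edge_src (e : G.E) : LRel (fv R G (G.s e) * fe R G e) (fe R G e)
  | edge_rng (e : G.E) : LRel (fe R G e * fv R G (G.r e)) (fe R G e)
  | ghost_rng (e : G.E) : LRel (fv R G (G.r e) * fg R G e) (fg R G e)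
  | ghost_src (e : G.E) : LRel (fg R G e * fv R G (G.s e)) (fg R G e)
  | ck1_same (e : G.E) : LRel (fg R G e * fe R G e) (fv R G (G.r e))
  | ck1_diff (e f : G.E) (h : e ≠ f) : LRel (fg R G e * fe R G f) 0
  | ck2 (v : G.V) (h1 : {e : G.E | G.s e = v}.Finite)
      (h2 : {e : G.E | G.s e = v}.Nonempty) :
      LRel (fv R G v) (∑ e ∈ h1.toFinset, fe R G e * fg R G e)

/-- The Leavitt path algebra `L_R(E)`. -/
abbrev LPA := RingQuot (LRel R G)

noncomputable def Xv (v : G.V) : LPA R G := RingQuot.mkAlgHom R (LRel R G) (fv R G v)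
noncomputable def Xe (e : G.E) : LPA R G := RingQuot.mkAlgHom R (LRel R G) (fe R G e)
noncomputable def Xg (e : G.E) : LPA R G := RingQuot.mkAlgHom R (LRel R G) (fg R G e)

open MulOpposite in
/-- The involution on `L_R(E)`, built from the universal property, sending
`v ↦ v`, `e ↦ e*`, `e* ↦ e` and reversing products. -/
noncomputable def preStar : FreeAlgebra R (LGen G) →ₐ[R] (LPA R G)ᵐᵒᵖ :=
  FreeAlgebra.lift R fun x => match x with
    | LGen.vertex v => op (Xv R G v)
    | LGen.edge e => op (Xg R G e)
    | LGen.ghost e => op (Xe R G e)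

section starlemmas

lemma Xv_mul_self (v : G.V) : Xv R G v * Xv R G v = Xv R G v := by
  simpa only [Xv, map_mul] using RingQuot.mkAlgHom_rel R (LRel.idem (R := R) (G := G) v)

lemma Xv_mul_Xv (v w : G.V) (h : v ≠ w) : Xv R G v * Xv R G w = 0 := by
  simpa only [Xv, map_mul, map_zero] using
    RingQuot.mkAlgHom_rel R (LRel.orth (R := R) (G := G) v w h)

lemma Xv_mul_Xe (e : G.E) : Xv R G (G.s e) * Xe R G e = Xe R G e := by
  simpa only [Xv, Xe, map_mul] using RingQuot.mkAlgHom_rel R (LRel.edge_src (R := R) (G := G) e)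

lemma Xe_mul_Xv (e : G.E) : Xe R G e * Xv R G (G.r e) = Xe R G e := by
  simpa only [Xv, Xe, map_mul] using RingQuot.mkAlgHom_rel R (LRel.edge_rng (R := R) (G := G) e)

lemma Xv_mul_Xg (e : G.E) : Xv R G (G.r e) * Xg R G e = Xg R G e := by
  simpa only [Xv, Xg, map_mul] using RingQuot.mkAlgHom_rel R (LRel.ghost_rng (R := R) (G := G) e)

lemma Xg_mul_Xv (e : G.E) : Xg R G e * Xv R G (G.s e) = Xg R G e := by
  simpa only [Xv, Xg, map_mul] using RingQuot.mkAlgHom_rel R (LRel.ghost_src (R := R) (G := G) e)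

lemma Xg_mul_Xe_same (e : G.E) : Xg R G e * Xe R G e = Xv R G (G.r e) := by
  simpa only [Xv, Xe, Xg, map_mul] using
    RingQuot.mkAlgHom_rel R (LRel.ck1_same (R := R) (G := G) e)

lemma Xg_mul_Xe_diff (e f : G.E) (h : e ≠ f) : Xg R G e * Xe R G f = 0 := by
  simpa only [Xe, Xg, map_mul, map_zero] using
    RingQuot.mkAlgHom_rel R (LRel.ck1_diff (R := R) (G := G) e f h)

lemma Xv_ck2 (v : G.V) (h1 : {e : G.E | G.s e = v}.Finite)
    (h2 : {e : G.E | G.s e = v}.Nonempty) :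
    Xv R G v = ∑ e ∈ h1.toFinset, Xe R G e * Xg R G e := by
  simpa only [Xv, Xe, Xg, map_mul, map_sum] using
    RingQuot.mkAlgHom_rel R (LRel.ck2 (R := R) (G := G) v h1 h2)

open MulOpposite in
lemma preStar_rel : ∀ ⦃a b : FreeAlgebra R (LGen G)⦄, LRel R G a b →
    preStar R G a = preStar R G b := by
  intro a b h
  induction h with
  | idem v =>
      simp only [map_mul, preStar, fv, FreeAlgebra.lift_ι_apply, ← op_mul]
      exact congrArg op (Xv_mul_self R G v)
  | orth v w h =>
      simp only [map_mul, map_zero, preStar, fv, FreeAlgebra.lift_ι_apply, ← op_mul]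
      rw [Xv_mul_Xv R G w v h.symm]; rfl
  | edge_src e =>
      simp only [map_mul, preStar, fv, fe, FreeAlgebra.lift_ι_apply, ← op_mul]
      exact congrArg op (Xg_mul_Xv R G e)
  | edge_rng e =>
      simp only [map_mul, preStar, fv, fe, FreeAlgebra.lift_ι_apply, ← op_mul]
      exact congrArg op (Xv_mul_Xg R G e)
  | ghost_rng e =>
      simp only [map_mul, preStar, fv, fg, FreeAlgebra.lift_ι_apply, ← op_mul]
      exact congrArg op (Xe_mul_Xv R G e)
  | ghost_src e =>
      simp only [map_mul, preStar, fv, fg, FreeAlgebra.lift_ι_apply, ← op_mul]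
      exact congrArg op (Xv_mul_Xe R G e)
  | ck1_same e =>
      simp only [map_mul, preStar, fv, fe, fg, FreeAlgebra.lift_ι_apply, ← op_mul]
      exact congrArg op (Xg_mul_Xe_same R G e)
  | ck1_diff e f h =>
      simp only [map_mul, map_zero, preStar, fe, fg, FreeAlgebra.lift_ι_apply, ← op_mul]
      rw [Xg_mul_Xe_diff R G f e h.symm]; rfl
  | ck2 v h1 h2 =>
      simp only [map_sum, map_mul, preStar, fv, fe, fg, FreeAlgebra.lift_ι_apply, ← op_mul,
        ← Finset.op_sum]
      exact congrArg op (Xv_ck2 R G v h1 h2)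

end starlemmas

open MulOpposite in
noncomputable def starHom : LPA R G →ₐ[R] (LPA R G)ᵐᵒᵖ :=
  RingQuot.liftAlgHom R ⟨preStar R G, preStar_rel R G⟩

/-- The canonical involution (`*`-operation) on `L_R(E)`. -/
noncomputable def lpaStar (x : LPA R G) : LPA R G := MulOpposite.unop (starHom R G x)

/-- The element of `L_R(E)` associated to a path (product of real edges;
a trivial path gives the vertex). -/
noncomputable def pathE : ∀ {v w : G.V}, G.Path v w → LPA R G
  | _, _, .nil v => Xv R G v
  | _, _, .cons e p => Xe R G e * pathE p

/-- The ghost element `α*` of `L_R(E)` associated to a path `α`. -/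
noncomputable def pathG : ∀ {v w : G.V}, G.Path v w → LPA R G
  | _, _, .nil v => Xv R G v
  | _, _, .cons e p => pathG p * Xg R G e

/-- The homogeneous lpaComponent of degree `k` of `L_R(E)`:
the `R`-span of elements `αβ*` with `|α| - |β| = k`. -/
noncomputable def lpaComponent (k : ℤ) : Submodule R (LPA R G) :=
  Submodule.span R {x : LPA R G |
    ∃ (v₁ v₂ w : G.V) (α : G.Path v₁ w) (β : G.Path v₂ w),
      (α.length : ℤ) - (β.length : ℤ) = k ∧ x = pathE R G α * pathG R G β}

/-- A two-sided ideal of `L_R(E)` is graded if each of its elements is an `R`-linear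
combination of homogeneous elements belonging to the ideal. -/
def IsGraded (I : TwoSidedIdeal (LPA R G)) : Prop :=
  ∀ x ∈ I, x ∈ Submodule.span R
    (⋃ k : ℤ, (I : Set (LPA R G)) ∩ (lpaComponent R G k : Set (LPA R G)))

/-- A basic ideal: `r • x ∈ I` with `r ≠ 0` implies `x ∈ I`, for `x` a vertex or an
element of the form `v - ∑ᵢ eᵢeᵢ*` with `s(eᵢ) = v`. -/
def IsBasic (I : TwoSidedIdeal (LPA R G)) : Prop :=
  (∀ (r : R) (v : G.V), r ≠ 0 → r • Xv R G v ∈ I → Xv R G v ∈ I) ∧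
  (∀ (r : R) (v : G.V) (F : Finset G.E), r ≠ 0 → (∀ e ∈ F, G.s e = v) →
    r • (Xv R G v - ∑ e ∈ F, Xe R G e * Xg R G e) ∈ I →
    (Xv R G v - ∑ e ∈ F, Xe R G e * Xg R G e) ∈ I)

/-- `v^H = v - ∑_{s(e)=v, r(e)∉H} ee*`. -/
noncomputable def vH (H : Set G.V) (v : G.V) : LPA R G :=
  Xv R G v - ∑ᶠ (e : G.E) (_ : G.s e = v ∧ G.r e ∉ H), Xe R G e * Xg R G e

/-- `I(H,S)`: the two-sided ideal generated by `{v : v ∈ H} ∪ {v^H : v ∈ S}`. -/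
noncomputable def IHS (H S : Set G.V) : TwoSidedIdeal (LPA R G) :=
  TwoSidedIdeal.span ((fun v => Xv R G v) '' H ∪ (fun v => vH R G H v) '' S)

/-- The quotient ring of `L_R(E)` by a two-sided ideal, as an `R`-algebra. -/
abbrev QuotLPA (I : TwoSidedIdeal (LPA R G)) := RingQuot (fun a b : LPA R G => a - b ∈ I)

/-- The quotient graph `E/(H,S)`. -/
def quotGraph (H S : Set G.V) (hH : G.Hereditary H) : LPGraph where
  V := {v : G.V // v ∉ H} ⊕ {v : G.V // v ∈ G.BH H ∧ v ∉ S}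
  E := {e : G.E // G.r e ∉ H} ⊕ {e : G.E // G.r e ∈ G.BH H ∧ G.r e ∉ S}
  s := fun x => match x with
    | Sum.inl e => Sum.inl ⟨G.s e.1, fun h => e.2 (hH e.1 h)⟩
    | Sum.inr e => Sum.inl ⟨G.s e.1, fun h => e.2.1.1 (hH e.1 h)⟩
  r := fun x => match x with
    | Sum.inl e => Sum.inl ⟨G.r e.1, e.2⟩
    | Sum.inr e => Sum.inr ⟨G.r e.1, e.2⟩


/-!
Since `I` is graded, it contains a nonzero homogeneous element. Left multiplication by a suitable
ghost edge `e*` (in positive degree) or right multiplication by a suitable edge `f` (in negative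
degree) keeps it nonzero and moves its degree towards `0`; these exist because the `ee*` are
orthogonal idempotents acting as a unit on such elements. In degree `0` the element is a
combination of monomials `αβ*` with `|α| = |β|`, and conjugation `e* · f` shortens them. When
every such conjugate vanishes, the element cut down by a suitable vertex `v` has the form
`s • (v - v ∑_{e ∈ E} ee*)`: conjugating by an edge `g ∉ E` out of `v` gives `s • r(g)`,
and if there is no such edge, `v` is a sink (the element is `s • v`) or the relation (CK2) at `v`
forces the element to vanish.
-/

open LPGraph Filter

section OrthogonalIdempotents

variable {R A ι : Type*} [CommSemiring R] [Semiring A] [Algebra R A] {p : ι → A}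

theorem OrthogonalIdempotents.sum_mul_of_mem (hp : OrthogonalIdempotents p) {i : ι}
    {s : Finset ι} (h : i ∈ s) : (∑ j ∈ s, p j) * p i = p i := by
  classical
  simp [Finset.sum_mul, hp.mul_eq, h]

theorem OrthogonalIdempotents.eventually_sum_mul_eq (hp : OrthogonalIdempotents p) {y : A}
    (hy : y ∈ Submodule.span R {x | ∃ i z, x = p i * z}) :
    ∀ᶠ s in atTop, (∑ i ∈ s, p i) * y = y := by
  induction hy using Submodule.span_induction with
  | mem x hx =>
    obtain ⟨i, z, rfl⟩ := hx
    filter_upwards [eventually_ge_atTop {i}] with s hs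
    rw [← mul_assoc, hp.sum_mul_of_mem (Finset.singleton_subset_iff.mp hs)]
  | zero => exact .of_forall fun _ => mul_zero _
  | add x y _ _ hx hy =>
    filter_upwards [hx, hy] with s hxs hys
    rw [mul_add, hxs, hys]
  | smul r x _ hx =>
    filter_upwards [hx] with s hs
    rw [mul_smul_comm, hs]

theorem OrthogonalIdempotents.eventually_mul_sum_eq (hp : OrthogonalIdempotents p) {y : A}
    (hy : y ∈ Submodule.span R {x | ∃ i z, x = z * p i}) :
    ∀ᶠ s in atTop, y * ∑ i ∈ s, p i = y := by
  induction hy using Submodule.span_induction with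
  | mem x hx =>
    obtain ⟨i, z, rfl⟩ := hx
    filter_upwards [eventually_ge_atTop {i}] with s hs
    rw [mul_assoc, hp.mul_sum_of_mem (Finset.singleton_subset_iff.mp hs)]
  | zero => exact .of_forall fun _ => zero_mul _
  | add x y _ _ hx hy =>
    filter_upwards [hx, hy] with s hxs hys
    rw [add_mul, hxs, hys]
  | smul r x _ hx =>
    filter_upwards [hx] with s hs
    rw [smul_mul_assoc, hs]

theorem OrthogonalIdempotents.exists_mul_ne_zero (hp : OrthogonalIdempotents p) {y : A}
    (hy : y ∈ Submodule.span R {x | ∃ i z, x = p i * z}) (hy0 : y ≠ 0) :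
    ∃ i, p i * y ≠ 0 := by
  classical
  obtain ⟨s, hs⟩ := (hp.eventually_sum_mul_eq hy).exists
  by_contra! h
  exact hy0 (by rw [← hs, Finset.sum_mul, Finset.sum_eq_zero fun i _ => h i])

theorem OrthogonalIdempotents.exists_mul_ne_zero' (hp : OrthogonalIdempotents p) {y : A}
    (hy : y ∈ Submodule.span R {x | ∃ i z, x = z * p i}) (hy0 : y ≠ 0) :
    ∃ i, y * p i ≠ 0 := by
  classical
  obtain ⟨s, hs⟩ := (hp.eventually_mul_sum_eq hy).exists
  by_contra! h
  exact hy0 (by rw [← hs, Finset.mul_sum, Finset.sum_eq_zero fun i _ => h i])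

end OrthogonalIdempotents

noncomputable def lpaComponentZeroLE (n : ℕ) : Submodule R (LPA R G) :=
  Submodule.span R {x : LPA R G |
    ∃ (v₁ v₂ w : G.V) (α : G.Path v₁ w) (β : G.Path v₂ w),
      α.length = β.length ∧ α.length ≤ n ∧ x = pathE R G α * pathG R G β}

section Relations

open scoped Classical

variable {R G}

@[simp] theorem pathE_nil (v : G.V) : pathE R G (Path.nil v) = Xv R G v := rfl

@[simp] theorem pathG_nil (v : G.V) : pathG R G (Path.nil v) = Xv R G v := rfl

theorem pathE_cons (e : G.E) {w : G.V} (α : G.Path (G.r e) w) :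
    pathE R G (Path.cons e α) = Xe R G e * pathE R G α := rfl

theorem pathG_cons (e : G.E) {w : G.V} (β : G.Path (G.r e) w) :
    pathG R G (Path.cons e β) = pathG R G β * Xg R G e := rfl

@[simp] theorem LPGraph.Path.length_nil (v : G.V) : (Path.nil v : G.Path v v).length = 0 := rfl

@[simp] theorem LPGraph.Path.length_cons (e : G.E) {w : G.V} (α : G.Path (G.r e) w) :
    (Path.cons e α).length = α.length + 1 := rfl

theorem Xv_mul_Xv_eq_ite (v w : G.V) :
    Xv R G v * Xv R G w = if v = w then Xv R G v else 0 := by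
  split_ifs with h
  · rw [h, Xv_mul_self]
  · exact Xv_mul_Xv R G v w h

theorem Xg_mul_Xv_eq_ite (e : G.E) (v : G.V) :
    Xg R G e * Xv R G v = if G.s e = v then Xg R G e else 0 := by
  rw [← Xg_mul_Xv R G e, mul_assoc, Xv_mul_Xv_eq_ite]
  split_ifs <;> simp

theorem Xg_mul_Xe_eq_ite (e f : G.E) :
    Xg R G e * Xe R G f = if e = f then Xv R G (G.r e) else 0 := by
  split_ifs with h
  · rw [h, Xg_mul_Xe_same]
  · exact Xg_mul_Xe_diff R G e f h

theorem Xv_mul_Xe_mul_Xg (v : G.V) (e : G.E) :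
    Xv R G v * (Xe R G e * Xg R G e) = if G.s e = v then Xe R G e * Xg R G e else 0 := by
  by_cases h : G.s e = v
  · subst h; rw [if_pos rfl, ← mul_assoc, Xv_mul_Xe]
  · rw [if_neg h, ← Xv_mul_Xe R G e, ← mul_assoc, ← mul_assoc, Xv_mul_Xv R G _ _ (Ne.symm h),
      zero_mul, zero_mul]

theorem Xe_mul_Xg_mul_Xv (e : G.E) (v : G.V) :
    Xe R G e * Xg R G e * Xv R G v = if G.s e = v then Xe R G e * Xg R G e else 0 := by
  rw [mul_assoc, Xg_mul_Xv_eq_ite]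
  split_ifs <;> simp

theorem commute_Xv_Xe_mul_Xg (v : G.V) (e : G.E) :
    Commute (Xv R G v) (Xe R G e * Xg R G e) := by
  rw [Commute, SemiconjBy, Xv_mul_Xe_mul_Xg, Xe_mul_Xg_mul_Xv]

theorem orthogonalIdempotents_Xv : OrthogonalIdempotents (Xv R G) :=
  ⟨Xv_mul_self R G, fun v w h => Xv_mul_Xv R G v w h⟩

theorem orthogonalIdempotents_Xe_mul_Xg :
    OrthogonalIdempotents fun e => Xe R G e * Xg R G e := by
  refine ⟨fun e => ?_, fun e f h => ?_⟩
  · rw [IsIdempotentElem, mul_assoc, ← mul_assoc (Xg R G e), Xg_mul_Xe_same, ← mul_assoc,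
      Xe_mul_Xv]
  · dsimp only
    rw [mul_assoc, ← mul_assoc (Xg R G e), Xg_mul_Xe_diff R G e f h, zero_mul, mul_zero]

theorem Xv_mul_pathE_self {v w : G.V} (α : G.Path v w) :
    Xv R G v * pathE R G α = pathE R G α := by
  cases α with
  | nil v => exact Xv_mul_self R G v
  | cons e α => rw [pathE_cons, ← mul_assoc, Xv_mul_Xe]

theorem pathG_mul_Xv_self {v w : G.V} (β : G.Path v w) :
    pathG R G β * Xv R G v = pathG R G β := by
  cases β with
  | nil v => exact Xv_mul_self R G v
  | cons e β => rw [pathG_cons, mul_assoc, Xg_mul_Xv]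

theorem Xg_mul_pathE_cons (e e₀ : G.E) {w : G.V} (α : G.Path (G.r e₀) w) :
    Xg R G e * pathE R G (Path.cons e₀ α) = if e = e₀ then pathE R G α else 0 := by
  rw [pathE_cons, ← mul_assoc, Xg_mul_Xe_eq_ite]
  split_ifs with h
  · subst h; exact Xv_mul_pathE_self α
  · exact zero_mul _

theorem pathG_cons_mul_Xe (f₀ f : G.E) {w : G.V} (β : G.Path (G.r f₀) w) :
    pathG R G (Path.cons f₀ β) * Xe R G f = if f = f₀ then pathG R G β else 0 := by
  rw [pathG_cons, mul_assoc, Xg_mul_Xe_eq_ite]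
  by_cases h : f = f₀
  · subst h; rw [if_pos rfl, if_pos rfl, pathG_mul_Xv_self]
  · rw [if_neg h, if_neg (Ne.symm h), mul_zero]

theorem Xe_mul_Xg_mul_pathE_cons (e : G.E) {w : G.V} (α : G.Path (G.r e) w) :
    Xe R G e * Xg R G e * pathE R G (Path.cons e α) = pathE R G (Path.cons e α) := by
  rw [mul_assoc, Xg_mul_pathE_cons, if_pos rfl, pathE_cons]

theorem pathG_cons_mul_Xe_mul_Xg (f : G.E) {w : G.V} (β : G.Path (G.r f) w) :
    pathG R G (Path.cons f β) * (Xe R G f * Xg R G f) = pathG R G (Path.cons f β) := by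
  rw [← mul_assoc, pathG_cons_mul_Xe, if_pos rfl, pathG_cons]

end Relations

section Grading

variable {R G}

theorem IsGraded.exists_ne_zero_mem_lpaComponent {I : TwoSidedIdeal (LPA R G)}
    (hgr : IsGraded R G I) {x : LPA R G} (hxI : x ∈ I) (hx0 : x ≠ 0) :
    ∃ k, ∃ y ∈ I, y ∈ lpaComponent R G k ∧ y ≠ 0 := by
  by_contra! h
  have hbot : Submodule.span R (⋃ k, (I : Set (LPA R G)) ∩ lpaComponent R G k) = ⊥ :=
    Submodule.span_eq_bot.mpr fun y hy => by
      obtain ⟨k, hyI, hy⟩ := Set.mem_iUnion.mp hy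
      exact h k y hyI hy
  exact hx0 (by simpa [hbot] using hgr x hxI)

theorem Xg_mul_mem_lpaComponent {k : ℤ} (hk : 0 < k) (e : G.E) {y : LPA R G}
    (hy : y ∈ lpaComponent R G k) : Xg R G e * y ∈ lpaComponent R G (k - 1) := by
  refine (Submodule.span_le (p := (lpaComponent R G (k - 1)).comap
    (LinearMap.mulLeft R (Xg R G e)))).mpr ?_ hy
  rintro _ ⟨v₁, v₂, w, α, β, hαβ, rfl⟩
  cases α with
  | nil => simp at hαβ; omega
  | cons e₀ α =>
    simp only [SetLike.mem_coe, Submodule.mem_comap, LinearMap.mulLeft_apply, ← mul_assoc,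
      Xg_mul_pathE_cons]
    split_ifs
    · exact Submodule.subset_span ⟨_, _, _, α, β, by simp at hαβ; omega, rfl⟩
    · rw [zero_mul]; exact zero_mem _

theorem mul_Xe_mem_lpaComponent {k : ℤ} (hk : k < 0) (f : G.E) {y : LPA R G}
    (hy : y ∈ lpaComponent R G k) : y * Xe R G f ∈ lpaComponent R G (k + 1) := by
  refine (Submodule.span_le (p := (lpaComponent R G (k + 1)).comap
    (LinearMap.mulRight R (Xe R G f)))).mpr ?_ hy
  rintro _ ⟨v₁, v₂, w, α, β, hαβ, rfl⟩
  cases β with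
  | nil => simp at hαβ; omega
  | cons f₀ β =>
    simp only [SetLike.mem_coe, Submodule.mem_comap, LinearMap.mulRight_apply, mul_assoc,
      pathG_cons_mul_Xe]
    split_ifs
    · exact Submodule.subset_span ⟨_, _, _, α, β, by simp at hαβ; omega, rfl⟩
    · rw [mul_zero]; exact zero_mem _

theorem lpaComponent_le_span_Xe_mul_Xg_mul {k : ℤ} (hk : 0 < k) :
    lpaComponent R G k ≤ Submodule.span R {x | ∃ e z, x = Xe R G e * Xg R G e * z} := by
  refine Submodule.span_mono ?_
  rintro _ ⟨v₁, v₂, w, α, β, hαβ, rfl⟩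
  cases α with
  | nil => simp at hαβ; omega
  | cons e α => exact ⟨e, _, by rw [← mul_assoc, Xe_mul_Xg_mul_pathE_cons]⟩

theorem lpaComponent_le_span_mul_Xe_mul_Xg {k : ℤ} (hk : k < 0) :
    lpaComponent R G k ≤ Submodule.span R {x | ∃ f z, x = z * (Xe R G f * Xg R G f)} := by
  refine Submodule.span_mono ?_
  rintro _ ⟨v₁, v₂, w, α, β, hαβ, rfl⟩
  cases β with
  | nil => simp at hαβ; omega
  | cons f β => exact ⟨f, _, by rw [mul_assoc, pathG_cons_mul_Xe_mul_Xg]⟩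

theorem exists_ne_zero_mem_lpaComponent_zero (I : TwoSidedIdeal (LPA R G)) (k : ℤ) :
    ∀ {y}, y ∈ I → y ∈ lpaComponent R G k → y ≠ 0 →
      ∃ z ∈ I, z ∈ lpaComponent R G 0 ∧ z ≠ 0 := by
  induction k with
  | zero => exact fun hyI hy hy0 => ⟨_, hyI, hy, hy0⟩
  | succ i ih =>
    intro y hyI hy hy0
    have hk : (0 : ℤ) < i + 1 := by omega
    obtain ⟨e, he⟩ := orthogonalIdempotents_Xe_mul_Xg.exists_mul_ne_zero
      (lpaComponent_le_span_Xe_mul_Xg_mul hk hy) hy0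
    refine ih (I.mul_mem_left _ _ hyI) (by simpa using Xg_mul_mem_lpaComponent hk e hy) ?_
    exact fun h => he (by rw [mul_assoc, h, mul_zero])
  | pred i ih =>
    intro y hyI hy hy0
    have hk : -(i : ℤ) - 1 < 0 := by omega
    obtain ⟨f, hf⟩ := orthogonalIdempotents_Xe_mul_Xg.exists_mul_ne_zero'
      (lpaComponent_le_span_mul_Xe_mul_Xg hk hy) hy0
    refine ih (I.mul_mem_right _ _ hyI) (by simpa using mul_Xe_mem_lpaComponent hk f hy) ?_
    exact fun h => hf (by rw [← mul_assoc, h, zero_mul])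

end Grading

section DegreeZero

variable {R G}

theorem pathE_mul_pathG_mem_lpaComponentZeroLE {n : ℕ} {v₁ v₂ w : G.V} (α : G.Path v₁ w)
    (β : G.Path v₂ w) (hαβ : α.length = β.length) (hn : α.length ≤ n) :
    pathE R G α * pathG R G β ∈ lpaComponentZeroLE R G n :=
  Submodule.subset_span ⟨_, _, _, α, β, hαβ, hn, rfl⟩

theorem lpaComponentZeroLE_mono : Monotone (lpaComponentZeroLE R G) := fun _ _ hmn =>
  Submodule.span_mono fun _ ⟨v₁, v₂, w, α, β, hαβ, hn, hx⟩ =>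
    ⟨v₁, v₂, w, α, β, hαβ, hn.trans hmn, hx⟩

theorem exists_mem_lpaComponentZeroLE {y : LPA R G} (hy : y ∈ lpaComponent R G 0) :
    ∃ n, y ∈ lpaComponentZeroLE R G n := by
  have hle : lpaComponent R G 0 ≤ ⨆ n, lpaComponentZeroLE R G n := by
    refine Submodule.span_le.mpr ?_
    rintro _ ⟨v₁, v₂, w, α, β, hαβ, rfl⟩
    exact Submodule.mem_iSup_of_mem α.length
      (pathE_mul_pathG_mem_lpaComponentZeroLE α β (by omega) le_rfl)
  exact (Submodule.mem_iSup_of_directed _ lpaComponentZeroLE_mono.directed_le).mp (hle hy)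

theorem lpaComponentZeroLE_le_span_Xv_mul (n : ℕ) :
    lpaComponentZeroLE R G n ≤ Submodule.span R {x | ∃ v z, x = Xv R G v * z} := by
  refine Submodule.span_mono ?_
  rintro _ ⟨v₁, v₂, w, α, β, -, -, rfl⟩
  exact ⟨v₁, _, by rw [← mul_assoc, Xv_mul_pathE_self]⟩

theorem lpaComponentZeroLE_zero_le_span_range :
    lpaComponentZeroLE R G 0 ≤ Submodule.span R (Set.range (Xv R G)) := by
  refine Submodule.span_mono ?_
  rintro _ ⟨v₁, v₂, w, α, β, hαβ, hn, rfl⟩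
  cases α with
  | cons => simp at hn
  | nil =>
    cases β with
    | cons => simp at hαβ
    | nil => exact ⟨v₁, by rw [pathE_nil, pathG_nil, Xv_mul_self]⟩

theorem lpaComponentZeroLE_le_sup (n : ℕ) :
    lpaComponentZeroLE R G n ≤ Submodule.span R (Set.range (Xv R G)) ⊔
      Submodule.span R {x | ∃ e f z, x = Xe R G e * Xg R G e * z * (Xe R G f * Xg R G f)} := by
  refine Submodule.span_le.mpr ?_
  rintro _ ⟨v₁, v₂, w, α, β, hαβ, -, rfl⟩
  cases α with
  | nil =>
    cases β with
    | cons => simp at hαβ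
    | nil =>
      exact Submodule.mem_sup_left (Submodule.subset_span
        ⟨v₁, by rw [pathE_nil, pathG_nil, Xv_mul_self]⟩)
  | cons e α =>
    cases β with
    | nil => simp at hαβ
    | cons f β =>
      refine Submodule.mem_sup_right (Submodule.subset_span
        ⟨e, f, pathE R G (.cons e α) * pathG R G (.cons f β), ?_⟩)
      rw [← mul_assoc (Xe R G e * Xg R G e), Xe_mul_Xg_mul_pathE_cons, mul_assoc,
        pathG_cons_mul_Xe_mul_Xg]

theorem Xg_mul_mul_Xe_mem_lpaComponentZeroLE {n : ℕ} (e f : G.E) {y : LPA R G}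
    (hy : y ∈ lpaComponentZeroLE R G (n + 1)) :
    Xg R G e * y * Xe R G f ∈ lpaComponentZeroLE R G n := by
  refine (Submodule.span_le (p := (lpaComponentZeroLE R G n).comap
    (LinearMap.mulLeftRight R (Xg R G e, Xe R G f)))).mpr ?_ hy
  rintro _ ⟨v₁, v₂, w, α, β, hαβ, hn, rfl⟩
  simp only [SetLike.mem_coe, Submodule.mem_comap, LinearMap.mulLeftRight_apply]
  cases α with
  | nil =>
    cases β with
    | cons => simp at hαβ
    | nil =>
      rw [pathE_nil, pathG_nil, Xv_mul_self, Xg_mul_Xv_eq_ite]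
      split_ifs
      · rw [Xg_mul_Xe_eq_ite]
        split_ifs
        · simpa [Xv_mul_self] using
            pathE_mul_pathG_mem_lpaComponentZeroLE (R := R) (n := n) (.nil (G.r e)) (.nil _) rfl
              (Nat.zero_le n)
        · exact zero_mem _
      · rw [zero_mul]; exact zero_mem _
  | cons e₀ α =>
    cases β with
    | nil => simp at hαβ
    | cons f₀ β =>
      rw [← mul_assoc, mul_assoc _ _ (Xe R G f), Xg_mul_pathE_cons, pathG_cons_mul_Xe]
      split_ifs
      · simp only [Path.length_cons] at hαβ hn
        exact pathE_mul_pathG_mem_lpaComponentZeroLE α β (by omega) (by omega)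
      all_goals simp

theorem Xv_mul_eq_smul_of_mem_span_range (v : G.V) {a : LPA R G}
    (ha : a ∈ Submodule.span R (Set.range (Xv R G))) :
    ∃ s : R, Xv R G v * a = s • Xv R G v := by
  induction ha using Submodule.span_induction with
  | mem x hx =>
    obtain ⟨u, rfl⟩ := hx
    rw [Xv_mul_Xv_eq_ite]
    split_ifs
    exacts [⟨1, (one_smul _ _).symm⟩, ⟨0, (zero_smul _ _).symm⟩]
  | zero => exact ⟨0, by rw [mul_zero, zero_smul]⟩
  | add x y _ _ hx hy =>
    obtain ⟨s, hs⟩ := hx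
    obtain ⟨t, ht⟩ := hy
    exact ⟨s + t, by rw [mul_add, hs, ht, add_smul]⟩
  | smul r x _ hx =>
    obtain ⟨s, hs⟩ := hx
    exact ⟨r * s, by rw [mul_smul_comm, hs, mul_smul]⟩

/-- With `q = ∑_{e ∈ E} ee*` a two-sided unit for the positive-length part `b` of `y = a + b`,
vanishing of all `e* y f` gives `q y q = 0`, hence `b = -q a q`. -/
theorem exists_Xv_mul_eq_smul_sub (v : G.V) {y : LPA R G}
    (hy : y ∈ Submodule.span R (Set.range (Xv R G)) ⊔
      Submodule.span R {x | ∃ e f z, x = Xe R G e * Xg R G e * z * (Xe R G f * Xg R G f)})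
    (hconj : ∀ e f, Xg R G e * y * Xe R G f = 0) :
    ∃ (s : R) (E : Finset G.E),
      Xv R G v * y = s • (Xv R G v - Xv R G v * ∑ e ∈ E, Xe R G e * Xg R G e) := by
  obtain ⟨a, ha, b, hb, rfl⟩ := Submodule.mem_sup.mp hy
  have hp := orthogonalIdempotents_Xe_mul_Xg (R := R) (G := G)
  have hbl : b ∈ Submodule.span R {x | ∃ e z, x = Xe R G e * Xg R G e * z} :=
    Submodule.span_mono (by rintro _ ⟨e, f, z, rfl⟩; exact ⟨e, _, mul_assoc _ _ _⟩) hb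
  have hbr : b ∈ Submodule.span R {x | ∃ f z, x = z * (Xe R G f * Xg R G f)} :=
    Submodule.span_mono (by rintro _ ⟨e, f, z, rfl⟩; exact ⟨f, _, rfl⟩) hb
  obtain ⟨E, hqb, hbq⟩ :=
    ((hp.eventually_sum_mul_eq hbl).and (hp.eventually_mul_sum_eq hbr)).exists
  set q := ∑ e ∈ E, Xe R G e * Xg R G e
  have hqyq : q * (a + b) * q = 0 := by
    simp only [q, Finset.sum_mul, Finset.mul_sum]
    refine Finset.sum_eq_zero fun f _ => Finset.sum_eq_zero fun e _ => ?_
    calc Xe R G e * Xg R G e * (a + b) * (Xe R G f * Xg R G f)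
        = Xe R G e * (Xg R G e * (a + b) * Xe R G f) * Xg R G f := by simp only [mul_assoc]
      _ = 0 := by rw [hconj, mul_zero, zero_mul]
  have hb : q * a * q + b = 0 := by rwa [mul_add, add_mul, hqb, hbq] at hqyq
  have hcomm : Commute (Xv R G v) q :=
    Commute.sum_right _ _ _ fun e _ => commute_Xv_Xe_mul_Xg v e
  obtain ⟨s, hs⟩ := Xv_mul_eq_smul_of_mem_span_range v ha
  refine ⟨s, E, ?_⟩
  calc Xv R G v * (a + b) = Xv R G v * a - q * (Xv R G v * a) * q := by
        rw [eq_sub_iff_add_eq, ← mul_assoc, ← hcomm.eq, mul_assoc, mul_assoc, ← mul_add,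
          add_assoc, add_comm b, ← mul_assoc, hb, add_zero]
    _ = s • (Xv R G v - Xv R G v * q) := by
        rw [hs, mul_smul_comm, smul_mul_assoc, ← hcomm.eq, mul_assoc,
          hp.isIdempotentElem_sum.eq, smul_sub]

end DegreeZero

section Conclusion

variable {R G}

theorem exists_smul_Xv_mem_of_smul_sub_mem {I : TwoSidedIdeal (LPA R G)} {s : R} {v : G.V}
    (E : Finset G.E) (hI : s • (Xv R G v - Xv R G v * ∑ e ∈ E, Xe R G e * Xg R G e) ∈ I)
    (hne : s • (Xv R G v - Xv R G v * ∑ e ∈ E, Xe R G e * Xg R G e) ≠ 0) :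
    ∃ (u : G.V) (r : R), r ≠ 0 ∧ r • Xv R G u ∈ I := by
  have hp := orthogonalIdempotents_Xe_mul_Xg (R := R) (G := G)
  have hs : s ≠ 0 := by rintro rfl; exact hne (zero_smul _ _)
  by_cases hout : ∃ g, G.s g = v ∧ g ∉ E
  · obtain ⟨g, rfl, hg⟩ := hout
    have hgE : Xg R G g * ∑ e ∈ E, Xe R G e * Xg R G e = 0 := by
      rw [Finset.mul_sum]
      refine Finset.sum_eq_zero fun e he => ?_
      rw [← mul_assoc, Xg_mul_Xe_diff R G g e (by rintro rfl; exact hg he), zero_mul]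
    refine ⟨G.r g, s, hs, ?_⟩
    convert I.mul_mem_right _ (Xe R G g) (I.mul_mem_left (Xg R G g) _ hI) using 1
    rw [mul_smul_comm, smul_mul_assoc, mul_sub, ← mul_assoc, Xg_mul_Xv, hgE, sub_zero,
      Xg_mul_Xe_same]
  · push Not at hout
    rcases Set.eq_empty_or_nonempty {e | G.s e = v} with hsink | hemit
    · have hvE : Xv R G v * ∑ e ∈ E, Xe R G e * Xg R G e = 0 := by
        rw [Finset.mul_sum]
        refine Finset.sum_eq_zero fun e _ => ?_
        have he : ¬G.s e = v := Set.eq_empty_iff_forall_notMem.mp hsink e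
        rw [Xv_mul_Xe_mul_Xg, if_neg he]
      exact ⟨v, s, hs, by rwa [hvE, sub_zero] at hI⟩
    · have hfin : {e | G.s e = v}.Finite := E.finite_toSet.subset fun e he => hout e he
      refine absurd ?_ hne
      rw [Xv_ck2 R G v hfin hemit, Finset.sum_mul, Finset.sum_congr rfl fun e he =>
        hp.mul_sum_of_mem (hout e (hfin.mem_toFinset.mp he)), sub_self, smul_zero]

theorem exists_smul_Xv_mem_of_mem_lpaComponentZeroLE (I : TwoSidedIdeal (LPA R G)) (n : ℕ)
    {y : LPA R G} (hyI : y ∈ I) (hy0 : y ≠ 0) (hy : y ∈ lpaComponentZeroLE R G n) :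
    ∃ (v : G.V) (r : R), r ≠ 0 ∧ r • Xv R G v ∈ I := by
  induction n generalizing y with
  | zero =>
    obtain ⟨v, hv⟩ := orthogonalIdempotents_Xv.exists_mul_ne_zero
      (lpaComponentZeroLE_le_span_Xv_mul 0 hy) hy0
    obtain ⟨s, hs⟩ :=
      Xv_mul_eq_smul_of_mem_span_range v (lpaComponentZeroLE_zero_le_span_range hy)
    refine ⟨v, s, ?_, hs ▸ I.mul_mem_left _ _ hyI⟩
    rintro rfl
    exact hv (by rw [hs, zero_smul])
  | succ n ih =>
    by_cases hconj : ∃ e f, Xg R G e * y * Xe R G f ≠ 0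
    · obtain ⟨e, f, hef⟩ := hconj
      exact ih (I.mul_mem_right _ _ (I.mul_mem_left _ _ hyI)) hef
        (Xg_mul_mul_Xe_mem_lpaComponentZeroLE e f hy)
    · push Not at hconj
      obtain ⟨v, hv⟩ := orthogonalIdempotents_Xv.exists_mul_ne_zero
        (lpaComponentZeroLE_le_span_Xv_mul _ hy) hy0
      obtain ⟨s, E, hs⟩ :=
        exists_Xv_mul_eq_smul_sub v (lpaComponentZeroLE_le_sup _ hy) hconj
      exact exists_smul_Xv_mem_of_smul_sub_mem E (hs ▸ I.mul_mem_left _ _ hyI) (hs ▸ hv)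

end Conclusion

/-- A nonzero graded ideal of `L_R(E)` contains `rv` for some vertex `v` and `r ≠ 0`. -/
theorem graded_ideal_contains_smul_vertex (G : LPGraph) (R : Type) [CommRing R]
    (I : TwoSidedIdeal (LPA R G)) (hgr : IsGraded R G I) (hne : ∃ x ∈ I, x ≠ 0) :
    ∃ (v : G.V) (r : R), r ≠ 0 ∧ r • Xv R G v ∈ I := by
  obtain ⟨x, hxI, hx0⟩ := hne
  obtain ⟨k, y, hyI, hy, hy0⟩ := hgr.exists_ne_zero_mem_lpaComponent hxI hx0
  obtain ⟨z, hzI, hz, hz0⟩ := exists_ne_zero_mem_lpaComponent_zero I k hyI hy hy0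
  obtain ⟨n, hn⟩ := exists_mem_lpaComponentZeroLE hz
  exact exists_smul_Xv_mem_of_mem_lpaComponentZeroLE I n hzI hz0 hn
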